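/- arXiv:1512.09343 — 4 statements merged into one kernel-verified Lean document; each statement's English description precedes it below -/
import Mathlib

section
/- Let K = ℚ(α) where α is the real fifth root of 18 (so α^5 = 18, and x^5 − 18 is irreducible over ℚ). Then each of the polynomials f₁(x) = x^5 − 18, f₂(x) = x^5 − 324, f₃(x) = x^5 − 24, f₄(x) = x^5 − 432, and f₅(x) = x^5 + 750x + 3750 is irreducible over ℚ and has a root in K. -/
/-!
Over `ℚ`, `X ^ p - a` with `p` prime is irreducible unless `a` is a `p`-th power. A rational
fifth root of an integer is an integer, and `18, 324, 24, 432` lie strictly between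
consecutive fifth powers. Their fifth roots
`α, α², α³/3, α⁴/3` lie in `ℚ(α)` because `324 = 18²`, `24 · 3⁵ = 18³` and `432 · 3⁵ = 18⁴`.
The trinomial `X⁵ + 750X + 3750` is Eisenstein at `3` and has the root `-α + α² - α³/3 - α⁴/3`.
-/

open Polynomial

theorem Rat.den_eq_one_of_pow_eq_intCast {q : ℚ} {k : ℕ} (hk : k ≠ 0) {n : ℤ}
    (h : q ^ k = n) : q.den = 1 := by
  have hden : q.den ^ k = 1 := by simpa [Rat.den_pow] using congrArg Rat.den h
  exact (pow_eq_one_iff.mp hden).resolve_right hk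

theorem Int.pow_ne_of_lt_of_lt {k : ℕ} (hk : Odd k) {a n : ℤ} (h₁ : a ^ k < n)
    (h₂ : n < (a + 1) ^ k) (m : ℤ) : m ^ k ≠ n := by
  rintro rfl
  have := hk.strictMono_pow.lt_iff_lt.mp h₁
  have := hk.strictMono_pow.lt_iff_lt.mp h₂
  omega

theorem Rat.pow_ne_intCast_of_lt_of_lt {k : ℕ} (hk : Odd k) {a n : ℤ} (h₁ : a ^ k < n)
    (h₂ : n < (a + 1) ^ k) (q : ℚ) : q ^ k ≠ n := by
  intro h
  have hq : (q.num : ℚ) = q :=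
    Rat.coe_int_num_of_den_eq_one (den_eq_one_of_pow_eq_intCast hk.pos.ne' h)
  exact Int.pow_ne_of_lt_of_lt hk h₁ h₂ q.num (by exact_mod_cast hq ▸ h)

theorem irreducible_X_pow_sub_intCast_of_lt_of_lt {p : ℕ} (hp : p.Prime) (hodd : Odd p)
    {a n : ℤ} (h₁ : a ^ p < n) (h₂ : n < (a + 1) ^ p) : Irreducible (X ^ p - (n : ℚ[X])) :=
  C_eq_intCast (R := ℚ) n ▸
    X_pow_sub_C_irreducible_of_prime hp (Rat.pow_ne_intCast_of_lt_of_lt hodd h₁ h₂)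

theorem Polynomial.IsEisensteinAt.irreducible_map_rat {f : ℤ[X]} {p : ℤ} (hp : Prime p)
    (hf : f.IsEisensteinAt (Ideal.span {p})) (hmonic : f.Monic) (hdeg : 0 < f.natDegree) :
    Irreducible (f.map (Int.castRingHom ℚ)) :=
  (IsPrimitive.Int.irreducible_iff_irreducible_map_cast hmonic.isPrimitive).mp <|
    hf.irreducible ((Ideal.span_singleton_prime hp.ne_zero).mpr hp) hmonic.isPrimitive hdeg

theorem irreducible_X_pow_five_sub {n : ℤ} (a : ℤ) (h₁ : a ^ 5 < n) (h₂ : n < (a + 1) ^ 5) :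
    Irreducible (X ^ 5 - (n : ℚ[X])) :=
  irreducible_X_pow_sub_intCast_of_lt_of_lt Nat.prime_five (by decide) h₁ h₂

theorem irreducible_X_pow_five_add_750_mul_X_add_3750 :
    Irreducible (X ^ 5 + 750 * X + 3750 : ℚ[X]) := by
  have hmonic : (X ^ 5 + 750 * X + 3750 : ℤ[X]).Monic := by monicity!
  have hdeg : (X ^ 5 + 750 * X + 3750 : ℤ[X]).natDegree = 5 := by compute_degree!
  have heisenstein : (X ^ 5 + 750 * X + 3750 : ℤ[X]).IsEisensteinAt (Ideal.span {3}) := by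
    refine ⟨?_, fun {k} hk => ?_, ?_⟩
    · rw [hmonic.leadingCoeff, Ideal.mem_span_singleton]
      norm_num
    · rw [hdeg] at hk
      rw [Ideal.mem_span_singleton]
      interval_cases k <;> norm_num [coeff_X_pow, coeff_X]
    · rw [Ideal.span_singleton_pow, Ideal.mem_span_singleton]
      norm_num [coeff_X_pow, coeff_X]
  simpa using heisenstein.irreducible_map_rat Int.prime_three hmonic (by omega)

section FifthRootOfEighteen

variable {F : Type*} [Field F] [CharZero F] {α : F}

theorem aeval_sq_X_pow_five_sub_324 (hα : α ^ 5 = 18) :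
    aeval (α ^ 2) (X ^ 5 - 324 : ℚ[X]) = 0 := by
  simp only [map_sub, map_pow, aeval_X, map_ofNat]
  linear_combination (α ^ 5 + 18) * hα

theorem aeval_pow_three_div_three_X_pow_five_sub_24 (hα : α ^ 5 = 18) :
    aeval (α ^ 3 / 3) (X ^ 5 - 24 : ℚ[X]) = 0 := by
  simp only [map_sub, map_pow, aeval_X, map_ofNat]
  field_simp
  linear_combination (α ^ 10 + 18 * α ^ 5 + 324) * hα

theorem aeval_pow_four_div_three_X_pow_five_sub_432 (hα : α ^ 5 = 18) :
    aeval (α ^ 4 / 3) (X ^ 5 - 432 : ℚ[X]) = 0 := by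
  simp only [map_sub, map_pow, aeval_X, map_ofNat]
  field_simp
  linear_combination (α ^ 15 + 18 * α ^ 10 + 324 * α ^ 5 + 5832) * hα

theorem aeval_X_pow_five_add_750_mul_X_add_3750 (hα : α ^ 5 = 18) :
    aeval (-α + α ^ 2 - α ^ 3 / 3 - α ^ 4 / 3) (X ^ 5 + 750 * X + 3750 : ℚ[X]) = 0 := by
  simp only [map_add, map_mul, map_pow, aeval_X, map_ofNat]
  -- the coefficient is the quotient of the left side, a polynomial in `α`, by `α ^ 5 - 18`
  linear_combination (-(625 : F) / 3 + 125 / 3 * α - 125 / 3 * α ^ 2 + 125 / 9 * α ^ 3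
    + 125 / 9 * α ^ 4 - 311 / 27 * α ^ 5 + 55 / 27 * α ^ 6 - 5 / 3 * α ^ 7 - 5 / 81 * α ^ 8
    + 35 / 27 * α ^ 9 - 139 / 243 * α ^ 10 - 65 / 243 * α ^ 11 + 35 / 243 * α ^ 12
    + 5 / 243 * α ^ 13 - 5 / 243 * α ^ 14 - 1 / 243 * α ^ 15) * hα

end FifthRootOfEighteen

/-- Let `K = ℚ(α) ⊆ ℝ` where `α = 18^(1/5)` is the real fifth root of `18`.
Then each of the five listed trinomials is irreducible over `ℚ` and has a root
in `K`. -/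
theorem trinomials_of_Q_fifth_root_18 (α : ℝ) (hα : α = (18 : ℝ) ^ ((1 : ℝ) / 5)) :
    α ^ 5 = 18 ∧
    ∀ f ∈ [(X ^ 5 - 18 : ℚ[X]), X ^ 5 - 324, X ^ 5 - 24, X ^ 5 - 432,
        X ^ 5 + 750 * X + 3750],
      Irreducible f ∧
        ∃ γ ∈ IntermediateField.adjoin ℚ ({α} : Set ℝ), aeval γ f = 0 := by
  have hα5 : α ^ 5 = 18 := by
    rw [hα, one_div]
    exact_mod_cast Real.rpow_inv_natCast_pow (n := 5) (by norm_num) (by norm_num)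
  refine ⟨hα5, fun f hf => ?_⟩
  set K := IntermediateField.adjoin ℚ ({α} : Set ℝ)
  have hαK : α ∈ K := IntermediateField.mem_adjoin_simple_self ℚ α
  have h3K : (3 : ℝ) ∈ K := by simp
  fin_cases hf
  · exact ⟨by simpa using irreducible_X_pow_five_sub (n := 18) 1 (by norm_num) (by norm_num),
      α, hαK, by simp [hα5, map_ofNat]⟩
  · exact ⟨by simpa using irreducible_X_pow_five_sub (n := 324) 3 (by norm_num) (by norm_num),
      α ^ 2, pow_mem hαK 2, aeval_sq_X_pow_five_sub_324 hα5⟩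
  · exact ⟨by simpa using irreducible_X_pow_five_sub (n := 24) 1 (by norm_num) (by norm_num),
      α ^ 3 / 3, div_mem (pow_mem hαK 3) h3K, aeval_pow_three_div_three_X_pow_five_sub_24 hα5⟩
  · exact ⟨by simpa using irreducible_X_pow_five_sub (n := 432) 3 (by norm_num) (by norm_num),
      α ^ 4 / 3, div_mem (pow_mem hαK 4) h3K, aeval_pow_four_div_three_X_pow_five_sub_432 hα5⟩
  · exact ⟨irreducible_X_pow_five_add_750_mul_X_add_3750, _,
      sub_mem (sub_mem (add_mem (neg_mem hαK) (pow_mem hαK 2))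
        (div_mem (pow_mem hαK 3) h3K)) (div_mem (pow_mem hαK 4) h3K),
      aeval_X_pow_five_add_750_mul_X_add_3750 hα5⟩
end

section
/- Let K = ℚ(α) where α is a root of the irreducible polynomial f₁(x) = x^5 + 75x + 105. Then each of the polynomials f₂(x) = x^5 − 75x + 465, f₃(x) = x^5 − 1125x + 3825, f₄(x) = x^5 − 2025x + 65205, f₅(x) = x^5 + 2025x + 10665, f₆(x) = x^5 − 10125x + 83025, f₇(x) = x^5 + 28125x − 39375, and f₈(x) = x^5 − 3410625x + 86685375 has a root in K. -/
open Polynomial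

/-!
Each trinomial has an explicit root `g(α) / 79` in `ℚ(α)`, with `g ∈ ℤ[x]` of degree 4. Checking
that it is a root means reducing a polynomial of degree 20 in `α` to degree at most 4 by means of
`α ^ 5 = -75 α - 105`; the reduced polynomial is identically zero.
-/

theorem pow_eq_of_quintic_trinomial {R : Type*} [CommRing R] {a b α : R}
    (h : α ^ 5 + a * α + b = 0) {n : ℕ} (hn : 5 ≤ n) :
    α ^ n = -(a * α ^ (n - 4)) - b * α ^ (n - 5) := by
  obtain ⟨k, rfl⟩ := Nat.exists_eq_add_of_le' hn
  rw [show k + 5 - 4 = k + 1 by omega, Nat.add_sub_cancel]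
  linear_combination α ^ k * h

theorem trinomials_of_x5_add_75x_add_105_general
    (K : Type*) [Field K] [Algebra ℚ K]
    (α : K) (hα : aeval α (X ^ 5 + 75 * X + 105 : ℚ[X]) = 0) :
    ∀ f ∈ [(X ^ 5 - 75 * X + 465 : ℚ[X]),
        X ^ 5 - 1125 * X + 3825,
        X ^ 5 - 2025 * X + 65205,
        X ^ 5 + 2025 * X + 10665,
        X ^ 5 - 10125 * X + 83025,
        X ^ 5 + 28125 * X - 39375,
        X ^ 5 - 3410625 * X + 86685375],
      ∃ γ : K, aeval γ f = 0 := by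
  have h : α ^ 5 + 75 * α + 105 = 0 := by
    simpa only [map_add, map_mul, map_pow, aeval_X, map_ofNat] using hα
  have : CharZero K := charZero_of_injective_algebraMap (algebraMap ℚ K).injective
  simp only [List.forall_mem_cons, List.not_mem_nil, IsEmpty.forall_iff, implies_true, and_true]
  refine ⟨⟨(-240 - 23 * α - 32 * α ^ 2 + 7 * α ^ 3 - 4 * α ^ 4) / 79, ?_⟩,
    ⟨(-240 + 135 * α - 32 * α ^ 2 + 7 * α ^ 3 - 4 * α ^ 4) / 79, ?_⟩,
    ⟨(-780 + 24 * α + 54 * α ^ 2 + 3 * α ^ 3 - 13 * α ^ 4) / 79, ?_⟩,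
    ⟨(-180 + 42 * α - 24 * α ^ 2 + 25 * α ^ 3 - 3 * α ^ 4) / 79, ?_⟩,
    ⟨(-660 + 75 * α - 9 * α ^ 2 + 39 * α ^ 3 - 11 * α ^ 4) / 79, ?_⟩,
    ⟨(-180 - 195 * α + 55 * α ^ 2 + 25 * α ^ 3 - 3 * α ^ 4) / 79, ?_⟩,
    ⟨(-3180 + 110 * α + 50 * α ^ 2 + 152 * α ^ 3 - 53 * α ^ 4) / 79, ?_⟩⟩
  all_goals
    simp only [map_add, map_sub, map_mul, map_pow, aeval_X, map_ofNat]
    ring_nf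
    simp only [pow_eq_of_quintic_trinomial h, Nat.reduceLeDiff, Nat.reduceSub]
    ring

/-- Let `K = ℚ(α)` where `α` is a root of the irreducible polynomial
`x^5 + 75x + 105`. Then each of the seven listed trinomials has a root in `K`. -/
theorem trinomials_of_x5_add_75x_add_105
    (hirr : Irreducible (X ^ 5 + 75 * X + 105 : ℚ[X]))
    (K : Type*) [Field K] [Algebra ℚ K]
    (α : K) (hα : aeval α (X ^ 5 + 75 * X + 105 : ℚ[X]) = 0)
    (hgen : Algebra.adjoin ℚ ({α} : Set K) = ⊤) :
    ∀ f ∈ [(X ^ 5 - 75 * X + 465 : ℚ[X]),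
        X ^ 5 - 1125 * X + 3825,
        X ^ 5 - 2025 * X + 65205,
        X ^ 5 + 2025 * X + 10665,
        X ^ 5 - 10125 * X + 83025,
        X ^ 5 + 28125 * X - 39375,
        X ^ 5 - 3410625 * X + 86685375],
      ∃ γ : K, aeval γ f = 0 :=
  trinomials_of_x5_add_75x_add_105_general K α hα
end

section
/- Let r be a rational number with r ≠ 0, r ≠ 1 and r ≠ −1. Let K be a field extension of ℚ and let α ∈ K satisfy α^5 = r^3(r+1)(r−1)^4. Set a = −80r(r^2−1)(r^2+r−1)(r^2−4r−1)/(r^2+1)^4 and b = −32r(r^2−1)(r^4+22r^3−6r^2−22r+1)/(r^2+1)^4. Then there exists β in the ℚ-subalgebra of K generated by α such that β^5 + aβ + b = 0. -/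
/-!
If `α ^ 5 = N`, then `β = c₁ α + c₂ α² + c₃ α³ + c₄ α⁴` is a root of its norm
`∏_{ζ⁵ = 1} (X - ∑ cᵢ (ζ α)ⁱ)`. Writing `pᵢ = cᵢ αⁱ`, the coefficients of this quintic are
the monomials in the `pᵢ` of weight `∑ i·eᵢ ≡ 0 (mod 5)`, hence polynomials in the `cᵢ` and `N`.
The coefficients `cᵢ` of the Spearman–Williams root make the `X³` and `X²` coefficients vanish,
and the remaining two are `a` and `b`.
-/

open Polynomial

section NormQuintic

variable {R : Type*} [CommRing R]

theorem sum_four_satisfies_norm_quintic (p₁ p₂ p₃ p₄ : R) :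
    (p₁ + p₂ + p₃ + p₄) ^ 5 - 5 * (p₁ * p₄ + p₂ * p₃) * (p₁ + p₂ + p₃ + p₄) ^ 3
      - 5 * (p₁ ^ 2 * p₃ + p₁ * p₂ ^ 2 + p₂ * p₄ ^ 2 + p₃ ^ 2 * p₄) * (p₁ + p₂ + p₃ + p₄) ^ 2
      + 5 * (p₁ ^ 2 * p₄ ^ 2 + p₂ ^ 2 * p₃ ^ 2 - p₁ ^ 3 * p₂ - p₂ ^ 3 * p₄ - p₁ * p₃ ^ 3
          - p₃ * p₄ ^ 3 - p₁ * p₂ * p₃ * p₄) * (p₁ + p₂ + p₃ + p₄)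
      - (p₁ ^ 5 + p₂ ^ 5 + p₃ ^ 5 + p₄ ^ 5
          - 5 * (p₁ ^ 3 * p₃ * p₄ + p₁ * p₂ ^ 3 * p₃ + p₂ * p₃ ^ 3 * p₄ + p₁ * p₂ * p₄ ^ 3)
          + 5 * (p₁ ^ 2 * p₂ * p₃ ^ 2 + p₁ ^ 2 * p₂ ^ 2 * p₄ + p₂ ^ 2 * p₃ * p₄ ^ 2
            + p₁ * p₃ ^ 2 * p₄ ^ 2)) = 0 := by
  ring

def quinticLinearCoeff (N c₁ c₂ c₃ c₄ : R) : R :=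
  5 * (N ^ 2 * (c₁ ^ 2 * c₄ ^ 2 + c₂ ^ 2 * c₃ ^ 2 - c₂ ^ 3 * c₄ - c₁ * c₃ ^ 3 - c₁ * c₂ * c₃ * c₄)
    - N * c₁ ^ 3 * c₂ - N ^ 3 * c₃ * c₄ ^ 3)

def quinticConstCoeff (N c₁ c₂ c₃ c₄ : R) : R :=
  -(c₁ ^ 5 * N + c₂ ^ 5 * N ^ 2 + c₃ ^ 5 * N ^ 3 + c₄ ^ 5 * N ^ 4
    - 5 * N ^ 2 *
      (c₁ ^ 3 * c₃ * c₄ + c₁ * c₂ ^ 3 * c₃ - c₁ ^ 2 * c₂ * c₃ ^ 2 - c₁ ^ 2 * c₂ ^ 2 * c₄)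
    - 5 * N ^ 3 *
      (c₂ * c₃ ^ 3 * c₄ + c₁ * c₂ * c₄ ^ 3 - c₂ ^ 2 * c₃ * c₄ ^ 2 - c₁ * c₃ ^ 2 * c₄ ^ 2))

theorem map_quinticLinearCoeff {S : Type*} [CommRing S] (f : R →+* S) (N c₁ c₂ c₃ c₄ : R) :
    f (quinticLinearCoeff N c₁ c₂ c₃ c₄) =
      quinticLinearCoeff (f N) (f c₁) (f c₂) (f c₃) (f c₄) := by
  simp [quinticLinearCoeff, map_ofNat]

theorem map_quinticConstCoeff {S : Type*} [CommRing S] (f : R →+* S) (N c₁ c₂ c₃ c₄ : R) :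
    f (quinticConstCoeff N c₁ c₂ c₃ c₄) =
      quinticConstCoeff (f N) (f c₁) (f c₂) (f c₃) (f c₄) := by
  simp [quinticConstCoeff, map_ofNat]

theorem bringJerrard_of_pow_five_eq {N c₁ c₂ c₃ c₄ α : R} (hα : α ^ 5 = N)
    (h₂ : c₁ * c₄ + c₂ * c₃ = 0)
    (h₃ : N * (c₁ ^ 2 * c₃ + c₁ * c₂ ^ 2) + N ^ 2 * (c₂ * c₄ ^ 2 + c₃ ^ 2 * c₄) = 0) :
    let β := c₁ * α + c₂ * α ^ 2 + c₃ * α ^ 3 + c₄ * α ^ 4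
    β ^ 5 + quinticLinearCoeff N c₁ c₂ c₃ c₄ * β + quinticConstCoeff N c₁ c₂ c₃ c₄ = 0 := by
  intro β
  subst hα
  unfold quinticLinearCoeff quinticConstCoeff
  linear_combination sum_four_satisfies_norm_quintic (c₁ * α) (c₂ * α ^ 2) (c₃ * α ^ 3) (c₄ * α ^ 4)
    + 5 * α ^ 5 * β ^ 3 * h₂ + 5 * β ^ 2 * h₃

end NormQuintic

theorem spearmanWilliams_coeffs {F : Type*} [Field F] {r c₁ c₂ c₃ c₄ : F}
    (hr0 : r ≠ 0) (hr1 : r ≠ 1) (hD : r ^ 2 + 1 ≠ 0)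
    (hc₁ : c₁ = 2 / (r ^ 2 + 1)) (hc₂ : c₂ = 2 / ((r ^ 2 + 1) * r * (r - 1)))
    (hc₃ : c₃ = 2 / ((r ^ 2 + 1) * r * (r - 1) ^ 2))
    (hc₄ : c₄ = -2 / ((r ^ 2 + 1) * r ^ 2 * (r - 1) ^ 3)) :
    let N := r ^ 3 * (r + 1) * (r - 1) ^ 4
    c₁ * c₄ + c₂ * c₃ = 0 ∧
    N * (c₁ ^ 2 * c₃ + c₁ * c₂ ^ 2) + N ^ 2 * (c₂ * c₄ ^ 2 + c₃ ^ 2 * c₄) = 0 ∧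
    quinticLinearCoeff N c₁ c₂ c₃ c₄ =
      -80 * r * (r ^ 2 - 1) * (r ^ 2 + r - 1) * (r ^ 2 - 4 * r - 1) / (r ^ 2 + 1) ^ 4 ∧
    quinticConstCoeff N c₁ c₂ c₃ c₄ =
      -32 * r * (r ^ 2 - 1) * (r ^ 4 + 22 * r ^ 3 - 6 * r ^ 2 - 22 * r + 1) / (r ^ 2 + 1) ^ 4 := by
  have hr1' : r - 1 ≠ 0 := sub_ne_zero.mpr hr1
  subst hc₁ hc₂ hc₃ hc₄
  refine ⟨?_, ?_, ?_, ?_⟩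
  · field_simp; ring
  · field_simp; ring
  · unfold quinticLinearCoeff; field_simp; ring
  · unfold quinticConstCoeff; field_simp; ring

theorem spearman_williams_family_general (r : ℚ) (hr0 : r ≠ 0) (hr1 : r ≠ 1)
    (K : Type*) [Field K] [Algebra ℚ K] (α : K)
    (hα : α ^ 5 = algebraMap ℚ K (r ^ 3 * (r + 1) * (r - 1) ^ 4))
    (a b : ℚ)
    (hab : a = -80 * r * (r ^ 2 - 1) * (r ^ 2 + r - 1) * (r ^ 2 - 4 * r - 1) / (r ^ 2 + 1) ^ 4)
    (hbb : b = -32 * r * (r ^ 2 - 1) * (r ^ 4 + 22 * r ^ 3 - 6 * r ^ 2 - 22 * r + 1) / (r ^ 2 + 1) ^ 4) :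
    ∃ β ∈ Algebra.adjoin ℚ ({α} : Set K),
      β ^ 5 + algebraMap ℚ K a * β + algebraMap ℚ K b = 0 := by
  obtain ⟨h₂, h₃, hL, hC⟩ := spearmanWilliams_coeffs hr0 hr1 (by positivity) rfl rfl rfl rfl
  set f := algebraMap ℚ K
  set c₁ : ℚ := 2 / (r ^ 2 + 1)
  set c₂ : ℚ := 2 / ((r ^ 2 + 1) * r * (r - 1))
  set c₃ : ℚ := 2 / ((r ^ 2 + 1) * r * (r - 1) ^ 2)
  set c₄ : ℚ := -2 / ((r ^ 2 + 1) * r ^ 2 * (r - 1) ^ 3)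
  refine ⟨f c₁ * α + f c₂ * α ^ 2 + f c₃ * α ^ 3 + f c₄ * α ^ 4, ?_, ?_⟩
  · have := aeval_mem_adjoin_singleton ℚ α
      (p := C c₁ * X + C c₂ * X ^ 2 + C c₃ * X ^ 3 + C c₄ * X ^ 4)
    simp only [map_add, map_mul, map_pow, aeval_C, aeval_X] at this
    exact this
  · rw [hab, hbb, ← hL, ← hC, map_quinticLinearCoeff, map_quinticConstCoeff]
    refine bringJerrard_of_pow_five_eq hα ?_ ?_
    · simpa only [map_add, map_mul, map_zero] using congrArg f h₂
    · simpa only [map_add, map_mul, map_pow, map_zero] using congrArg f h₃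

/-- (Spearman–Williams) Let `r ∈ ℚ`, `r ≠ 0, ±1`, and let `α` in a field
extension `K/ℚ` satisfy `α⁵ = r³(r+1)(r-1)⁴`. With `a, b` the explicit rational
numbers below, there is an element `β` of the `ℚ`-subalgebra generated by `α`
with `β⁵ + aβ + b = 0`. -/
theorem spearman_williams_family (r : ℚ) (hr0 : r ≠ 0) (hr1 : r ≠ 1) (hrm1 : r ≠ -1)
    (K : Type*) [Field K] [Algebra ℚ K] (α : K)
    (hα : α ^ 5 = algebraMap ℚ K (r ^ 3 * (r + 1) * (r - 1) ^ 4))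
    (a b : ℚ)
    (hab : a = -80 * r * (r ^ 2 - 1) * (r ^ 2 + r - 1) * (r ^ 2 - 4 * r - 1) / (r ^ 2 + 1) ^ 4)
    (hbb : b = -32 * r * (r ^ 2 - 1) * (r ^ 4 + 22 * r ^ 3 - 6 * r ^ 2 - 22 * r + 1) / (r ^ 2 + 1) ^ 4) :
    ∃ β ∈ Algebra.adjoin ℚ ({α} : Set K),
      β ^ 5 + algebraMap ℚ K a * β + algebraMap ℚ K b = 0 :=
  spearman_williams_family_general r hr0 hr1 K α hα a b hab hbb
end

section
/- Let a, b, c, d be rational numbers with X(a,b,c,d) = 0 and with M := 32bd + 16c^2 + 40cd ≠ 0. Set t = (5a^2 − 50ab)/M, and assume t ≠ 0 and that x^5 + t x + t is irreducible over ℚ. Let α be a root of x^5 + t x + t, let K = ℚ(α), set e = 5a/(4t), and let β = a + bα + cα^2 + dα^3 + eα^4. Then the characteristic polynomial of the ℚ-linear map T_β : K → K given by multiplication by β has the form x^5 + r x + s for some rationals r, s; that is, β is a root of a trinomial x^5 + r x + s with rational coefficients. -/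
/-! In the basis `1, α, …, α⁴` multiplication by `β` has an explicit matrix, so the
characteristic polynomial of `T_β` is `X⁵ - σ₁X⁴ + σ₂X³ - σ₃X² + σ₄X - σ₅` with each `σᵢ` a
polynomial in `a, b, c, d, e, t`; it is a trinomial as soon as `σ₁ = σ₂ = σ₃ = 0`. The choice
of `e` makes `σ₁ = 5a - 4te` vanish. Given `4te = 5a`, `8σ₂ = tM - (5a² - 50ab)`, which
vanishes by the choice of `t`. Eliminating `e` and then `t` turns `M²σ₃` into `5a·X(a, b, c, d)`,
so the surface equation makes `σ₃` vanish. -/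

open Polynomial

/-- The polynomial defining the surface `X` of quintic fields with more than
one trinomial. -/
def surfX (a b c d : ℚ) : ℚ :=
  20 * a ^ 3 * c * d ^ 2 + 15 * a ^ 3 * d ^ 3 + 128 * a ^ 2 * b ^ 2 * d ^ 2
    + 128 * a ^ 2 * b * c ^ 2 * d + 240 * a ^ 2 * b * c * d ^ 2
    - 100 * a ^ 2 * b * d ^ 3 + 32 * a ^ 2 * c ^ 4 + 320 * a ^ 2 * c ^ 3 * d
    + 700 * a ^ 2 * c ^ 2 * d ^ 2 + 250 * a ^ 2 * c * d ^ 3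
    - 128 * a * b ^ 3 * c * d - 480 * a * b ^ 3 * d ^ 2 - 64 * a * b ^ 2 * c ^ 3
    - 720 * a * b ^ 2 * c ^ 2 * d - 600 * a * b ^ 2 * c * d ^ 2
    - 500 * a * b ^ 2 * d ^ 3 - 160 * a * b * c ^ 4 - 600 * a * b * c ^ 3 * d
    - 1500 * a * b * c ^ 2 * d ^ 2 - 2500 * a * b * c * d ^ 3 + 400 * a * c ^ 5
    + 2000 * a * c ^ 4 * d + 2500 * a * c ^ 3 * d ^ 2 + 1280 * b ^ 4 * c * d
    + 1600 * b ^ 4 * d ^ 2 + 640 * b ^ 3 * c ^ 3 + 4000 * b ^ 3 * c ^ 2 * d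
    + 2000 * b ^ 3 * c * d ^ 2 + 800 * b ^ 2 * c ^ 4 + 2000 * b ^ 2 * c ^ 3 * d

theorem exists_basis_pow_of_adjoin_eq_top {K L : Type*} [Field K] [Field L] [Algebra K L]
    [FiniteDimensional K L] {α : L} (hgen : Algebra.adjoin K {α} = ⊤) {n : ℕ}
    (hn : (minpoly K α).natDegree = n) :
    ∃ B : Module.Basis (Fin n) K L, ∀ i, B i = α ^ (i : ℕ) := by
  let pb := PowerBasis.ofAdjoinEqTop' (Algebra.IsIntegral.isIntegral α) hgen
  refine ⟨pb.basis.reindex (finCongr hn), fun i => ?_⟩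
  rw [Module.Basis.reindex_apply, PowerBasis.coe_basis]
  simp only [PowerBasis.ofAdjoinEqTop'_gen, PowerBasis.ofAdjoinEqTop'_dim, finCongr_symm, pb]
  rfl

section CommRing

variable {R : Type*} [CommRing R]

/-- Column `j` holds the coordinates of `(a + bα + cα² + dα³ + eα⁴) αʲ` in the basis
`1, α, …, α⁴`, reduced with `α⁵ = -tα - t`. -/
def quinticMulMatrix (t a b c d e : R) : Matrix (Fin 5) (Fin 5) R :=
  !![a, -(t * e), -(t * d), -(t * c), -(t * b);
     b, a - t * e, -(t * (d + e)), -(t * (c + d)), -(t * (b + c));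
     c, b, a - t * e, -(t * (d + e)), -(t * (c + d));
     d, c, b, a - t * e, -(t * (d + e));
     e, d, c, b, a - t * e]

def quinticSigma2 (t a b c d e : R) : R :=
  10 * a ^ 2 - 16 * t * a * e + t * (4 * b * d + 5 * b * e + 2 * c ^ 2 + 5 * c * d)
    + 6 * t ^ 2 * e ^ 2

def quinticSigma3 (t a b c d e : R) : R :=
  10 * a ^ 3 - 24 * t * a ^ 2 * e
    + t * (12 * a * b * d + 15 * a * b * e + 6 * a * c ^ 2 + 15 * a * c * d
      - 4 * b ^ 2 * c - 5 * b ^ 2 * d - 5 * b * c ^ 2)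
    + t ^ 2 * (18 * a * e ^ 2 - 8 * b * d * e - 11 * b * e ^ 2 - 4 * c ^ 2 * e + 4 * c * d ^ 2
      - 2 * c * d * e + 5 * c * e ^ 2 + 3 * d ^ 3 + 5 * d ^ 2 * e)
    - 4 * t ^ 3 * e ^ 3

theorem toMatrix_mulLeft_eq_quinticMulMatrix {A : Type*} [CommRing A] [Algebra R A]
    (B : Module.Basis (Fin 5) R A) {α : A} (hB : ∀ i, B i = α ^ (i : ℕ)) {t : R}
    (hα : α ^ 5 + algebraMap R A t * α + algebraMap R A t = 0) (a b c d e : R) :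
    LinearMap.toMatrix B B (LinearMap.mulLeft R (algebraMap R A a + algebraMap R A b * α
      + algebraMap R A c * α ^ 2 + algebraMap R A d * α ^ 3 + algebraMap R A e * α ^ 4)) =
      quinticMulMatrix t a b c d e := by
  rw [← LinearMap.toMatrix_toLin B B (quinticMulMatrix t a b c d e)]
  congr 1
  refine B.ext fun j => ?_
  rw [Matrix.toLin_self]
  fin_cases j <;>
    simp only [Fin.reduceFinMk, Fin.zero_eta, Fin.mk_one, Fin.isValue, hB, Fin.coe_ofNat_eq_mod,
      Nat.reduceMod, Nat.mod_succ, Nat.zero_mod, Nat.one_mod, pow_zero, pow_one, mul_one,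
      LinearMap.mulLeft_apply, quinticMulMatrix, Matrix.of_apply, Matrix.cons_val', Matrix.cons_val,
      Matrix.cons_val_zero, Matrix.cons_val_one, Matrix.cons_val_fin_one, Algebra.smul_def,
      Fin.sum_univ_five, map_neg, map_mul, map_add, map_sub, neg_mul]
  · linear_combination algebraMap R A e * hα
  · linear_combination (algebraMap R A d + algebraMap R A e * α) * hα
  · linear_combination (algebraMap R A c + algebraMap R A d * α + algebraMap R A e * α ^ 2) * hα
  · linear_combination (algebraMap R A b + algebraMap R A c * α + algebraMap R A d * α ^ 2
      + algebraMap R A e * α ^ 3) * hα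

theorem charpoly_quinticMulMatrix (t a b c d e : R) :
    (quinticMulMatrix t a b c d e).charpoly =
      X ^ 5 - C (5 * a - 4 * t * e) * X ^ 4 + C (quinticSigma2 t a b c d e) * X ^ 3
        - C (quinticSigma3 t a b c d e) * X ^ 2
        + C (∑ i : Fin 5,
            ((quinticMulMatrix t a b c d e).submatrix i.succAbove i.succAbove).det) * X
        - C (quinticMulMatrix t a b c d e).det := by
  simp only [Matrix.charpoly, Matrix.det_succ_row_zero, Matrix.submatrix_apply,
    Matrix.submatrix_submatrix, Matrix.det_unique, Fin.default_eq_zero, Function.comp_apply,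
    Fin.sum_univ_succ, Fin.val_zero, Fin.zero_succAbove, Finset.univ_unique, Fin.val_succ,
    Fin.val_eq_zero, Fin.succ_succAbove_zero, Finset.sum_singleton, Fin.succ_succAbove_succ]
  simp only [Matrix.charmatrix_apply, quinticMulMatrix, Matrix.of_apply, Matrix.cons_val_succ,
    Matrix.cons_val_zero, Matrix.diagonal_apply, Fin.succ_inj, Fin.succ_ne_zero,
    (Fin.succ_ne_zero _).symm, if_true, if_false, quinticSigma2, quinticSigma3]
  simp only [map_add, map_sub, map_mul, map_neg, map_pow, map_ofNat, map_one]
  ring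

theorem eight_mul_quinticSigma2 (t a b c d e : R) (h : 4 * t * e = 5 * a) :
    8 * quinticSigma2 t a b c d e =
      t * (32 * b * d + 16 * c ^ 2 + 40 * c * d) - (5 * a ^ 2 - 50 * a * b) := by
  unfold quinticSigma2
  linear_combination (-17 * a + 10 * b + 12 * t * e) * h

end CommRing

theorem sq_mul_quinticSigma3 {t a b c d e : ℚ} (h : 4 * t * e = 5 * a)
    (h' : t * (32 * b * d + 16 * c ^ 2 + 40 * c * d) = 5 * a ^ 2 - 50 * a * b) :
    (32 * b * d + 16 * c ^ 2 + 40 * c * d) ^ 2 * quinticSigma3 t a b c d e =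
      5 * a * surfX a b c d := by
  set M := 32 * b * d + 16 * c ^ 2 + 40 * c * d
  set P₀ := 5 / 16 * a ^ 2 * (a + 5 * b + 25 * c)
  set P₁ := 2 * a * b * d + a * c ^ 2 + 25 / 2 * a * c * d + 25 / 4 * a * d ^ 2 - 4 * b ^ 2 * c
    - 5 * b ^ 2 * d - 5 * b * c ^ 2
  set P₂ := d ^ 2 * (4 * c + 3 * d)
  have hσ : quinticSigma3 t a b c d e = P₀ + t * P₁ + t ^ 2 * P₂ := by
    unfold quinticSigma3
    linear_combination (-31 / 16 * a ^ 2 + 5 / 16 * a * b + 25 / 16 * a * c + 13 / 4 * a * e * t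
      - 2 * b * d * t - 11 / 4 * b * e * t - c ^ 2 * t - 1 / 2 * c * d * t + 5 / 4 * c * e * t
      + 5 / 4 * d ^ 2 * t - e ^ 2 * t ^ 2) * h
  calc M ^ 2 * quinticSigma3 t a b c d e
        = M ^ 2 * P₀ + M * (t * M) * P₁ + (t * M) ^ 2 * P₂ := by rw [hσ]; ring
    _ = M ^ 2 * P₀ + M * (5 * a ^ 2 - 50 * a * b) * P₁ + (5 * a ^ 2 - 50 * a * b) ^ 2 * P₂ := by
        rw [h']
    _ = 5 * a * surfX a b c d := by
        unfold surfX; ring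

/-- If `(a, b, c, d)` is a point on the surface `X = 0` with
`M = 32bd + 16c^2 + 40cd` nonzero and `t = (5a^2 - 50ab)/M` nonzero, with
`x^5 + tx + t` irreducible with root `α` generating `K = ℚ(α)`, then with
`e = 5a/(4t)` the element `β = a + bα + cα^2 + dα^3 + eα^4` is a root of a
rational trinomial `x^5 + rx + s`. -/
theorem point_on_surface_gives_trinomial (a b c d : ℚ)
    (hX : surfX a b c d = 0)
    (hM : 32 * b * d + 16 * c ^ 2 + 40 * c * d ≠ 0)
    (t : ℚ) (ht : t = (5 * a ^ 2 - 50 * a * b) / (32 * b * d + 16 * c ^ 2 + 40 * c * d))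
    (ht0 : t ≠ 0)
    (hirr : Irreducible (X ^ 5 + C t * X + C t : ℚ[X]))
    (K : Type*) [Field K] [Algebra ℚ K] [FiniteDimensional ℚ K]
    (α : K) (hα : aeval α (X ^ 5 + C t * X + C t : ℚ[X]) = 0)
    (hgen : Algebra.adjoin ℚ ({α} : Set K) = ⊤)
    (e : ℚ) (he : e = 5 * a / (4 * t))
    (β : K)
    (hβ : β = algebraMap ℚ K a + algebraMap ℚ K b * α + algebraMap ℚ K c * α ^ 2
      + algebraMap ℚ K d * α ^ 3 + algebraMap ℚ K e * α ^ 4) :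
    ∃ r s : ℚ, (LinearMap.mulLeft ℚ β).charpoly = X ^ 5 + C r * X + C s := by
  have h4e : 4 * t * e = 5 * a := by rw [he]; field_simp
  have htM : t * (32 * b * d + 16 * c ^ 2 + 40 * c * d) = 5 * a ^ 2 - 50 * a * b := by
    rw [ht]; exact div_mul_cancel₀ _ hM
  have hσ₁ : 5 * a - 4 * t * e = 0 := by linear_combination -h4e
  have hσ₂ : quinticSigma2 t a b c d e = 0 := by
    linear_combination (eight_mul_quinticSigma2 t a b c d e h4e + htM) / 8
  have hσ₃ : quinticSigma3 t a b c d e = 0 := by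
    simpa [hX, hM] using sq_mul_quinticSigma3 h4e htM
  have hmin : minpoly ℚ α = X ^ 5 + C t * X + C t :=
    (minpoly.eq_of_irreducible_of_monic hirr hα (by monicity!)).symm
  obtain ⟨B, hB⟩ := exists_basis_pow_of_adjoin_eq_top hgen (n := 5) (by rw [hmin]; compute_degree!)
  have hα' : α ^ 5 + algebraMap ℚ K t * α + algebraMap ℚ K t = 0 := by simpa using hα
  rw [← LinearMap.charpoly_toMatrix _ B, hβ,
    toMatrix_mulLeft_eq_quinticMulMatrix B hB hα', charpoly_quinticMulMatrix, hσ₁, hσ₂, hσ₃]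
  simp only [map_zero, zero_mul, add_zero, sub_eq_add_neg, ← map_neg, neg_zero]
  exact ⟨_, _, rfl⟩
end
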